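/- arXiv:0908.2609 — 2 statements merged into one kernel-verified Lean document; each statement's English description precedes it below -/
import Mathlib

section
/- Homogenized Worpitzky identity: in the polynomial ring Q[z, y], for every positive integer k we have k! * z^k = sum over i from 1 to k of A(k, i-1) * product over j from 1 to k of (z + (i - j) * y). -/
open MvPolynomial

/-- Eulerian numbers. -/
def eulerian : ℕ → ℕ → ℕ
  | 0, 0 => 1
  | 0, _ + 1 => 0
  | n + 1, 0 => eulerian n 0
  | n + 1, k + 1 => (k + 2) * eulerian n (k + 1) + (n - k) * eulerian n k

lemma eulerian_zero_of_le : ∀ n k : ℕ, n + 1 ≤ k → eulerian (n + 1) k = 0 := by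
  intro n
  induction n with
  | zero =>
    intro k hk
    match k, hk with
    | m + 1, _ =>
      show eulerian 1 (m + 1) = 0
      rw [eulerian]
      simp [eulerian, Nat.zero_sub]
  | succ n ih =>
    intro k hk
    match k, hk with
    | m + 1, hk =>
      have hm : n + 1 ≤ m := by omega
      show eulerian (n + 2) (m + 1) = 0
      rw [eulerian]
      rw [ih (m + 1) (by omega), ih m hm]
      simp

noncomputable def Rp (a : ℚ) (k : ℕ) : MvPolynomial (Fin 2) ℚ :=
  ∏ j ∈ Finset.range k, (X 0 + C (a - ((j : ℚ) + 1)) * X 1)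

lemma Rp_key (a : ℚ) (k : ℕ) :
    C ((k : ℚ) + 1) * X 0 * Rp a k =
      C a * Rp a (k + 1) + C ((k : ℚ) + 1 - a) * Rp (a + 1) (k + 1) := by
  have h1 : Rp a (k + 1) = Rp a k * (X 0 + C (a - ((k : ℚ) + 1)) * X 1) :=
    Finset.prod_range_succ _ _
  have h2 : Rp (a + 1) (k + 1) = Rp a k * (X 0 + C a * X 1) := by
    rw [Rp, Finset.prod_range_succ']
    congr 1
    · apply Finset.prod_congr rfl
      intro j _
      push_cast
      ring_nf
    · push_cast
      ring_nf
  rw [h1, h2]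
  simp only [map_sub, map_add, map_one]
  ring

lemma worp (k : ℕ) (hk : 1 ≤ k) :
    (k.factorial : MvPolynomial (Fin 2) ℚ) * (X 0) ^ k =
      ∑ i ∈ Finset.range k, (eulerian k i : MvPolynomial (Fin 2) ℚ) * Rp ((i : ℚ) + 1) k := by
  induction k, hk using Nat.le_induction with
  | base =>
    simp [Rp, eulerian]
  | succ k hk ih =>
    have lhs_eq : ((k + 1).factorial : MvPolynomial (Fin 2) ℚ) * (X 0) ^ (k + 1) =
        C ((k : ℚ) + 1) * X 0 * ((k.factorial : MvPolynomial (Fin 2) ℚ) * (X 0) ^ k) := by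
      rw [Nat.factorial_succ]
      simp only [map_add, map_one, map_natCast]
      push_cast
      ring
    rw [lhs_eq, ih, Finset.mul_sum]
    have step : ∀ i ∈ Finset.range k,
        C ((k : ℚ) + 1) * X 0 * ((eulerian k i : MvPolynomial (Fin 2) ℚ) * Rp ((i : ℚ) + 1) k) =
        (eulerian k i : MvPolynomial (Fin 2) ℚ) *
          (C ((i : ℚ) + 1) * Rp ((i : ℚ) + 1) (k + 1)
            + C ((k : ℚ) - (i : ℚ)) * Rp ((i : ℚ) + 2) (k + 1)) := by
      intro i _
      have := Rp_key ((i : ℚ) + 1) k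
      have h2 : ((k : ℚ) + 1 - ((i : ℚ) + 1)) = (k : ℚ) - (i : ℚ) := by ring
      have h3 : ((i : ℚ) + 1 + 1) = (i : ℚ) + 2 := by ring
      rw [h2, h3] at this
      rw [mul_left_comm, this]
    rw [Finset.sum_congr rfl step]
    -- now RHS side manipulation
    simp only [mul_add]
    rw [Finset.sum_add_distrib]
    -- target sum: peel off i = 0
    rw [Finset.sum_range_succ' (fun i => (eulerian (k + 1) i : MvPolynomial (Fin 2) ℚ) * Rp ((i : ℚ) + 1) (k + 1))]
    have euler_succ : ∀ i : ℕ, eulerian (k + 1) (i + 1) = (i + 2) * eulerian k (i + 1) + (k - i) * eulerian k i := fun i => rfl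
    have euler_zero : eulerian (k + 1) 0 = eulerian k 0 := rfl
    have split : ∀ i ∈ Finset.range k,
        (eulerian (k + 1) (i + 1) : MvPolynomial (Fin 2) ℚ) * Rp (((i : ℕ) + 1 : ℕ) + 1) (k + 1) =
        (eulerian k (i + 1) : MvPolynomial (Fin 2) ℚ) * (C (((i : ℕ) + 1 : ℚ) + 1) * Rp (((i : ℕ) + 1 : ℚ) + 1) (k + 1))
        + (eulerian k i : MvPolynomial (Fin 2) ℚ) * (C ((k : ℚ) - (i : ℚ)) * Rp ((i : ℚ) + 2) (k + 1)) := by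
      intro i hi
      rw [euler_succ i]
      have hik : i ≤ k := le_of_lt (Finset.mem_range.mp hi)
      simp only [map_add, map_sub, map_one, map_natCast, map_ofNat]
      push_cast [Nat.cast_sub hik]
      ring
    rw [Finset.sum_congr rfl split, Finset.sum_add_distrib]
    have hAkk : eulerian k k = 0 := by
      obtain ⟨m, rfl⟩ : ∃ m, k = m + 1 := ⟨k - 1, by omega⟩
      exact eulerian_zero_of_le m (m + 1) le_rfl
    have hS1 : (∑ x ∈ Finset.range k,
          (eulerian k x : MvPolynomial (Fin 2) ℚ) * (C ((x : ℚ) + 1) * Rp ((x : ℚ) + 1) (k + 1)))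
        = (∑ x ∈ Finset.range k, (eulerian k (x + 1) : MvPolynomial (Fin 2) ℚ) *
            (C ((x : ℚ) + 1 + 1) * Rp ((x : ℚ) + 1 + 1) (k + 1)))
          + (eulerian k 0 : MvPolynomial (Fin 2) ℚ) * (C ((0 : ℚ) + 1) * Rp ((0 : ℚ) + 1) (k + 1)) := by
      have h := Finset.sum_range_succ'
        (fun x : ℕ => (eulerian k x : MvPolynomial (Fin 2) ℚ) *
          (C ((x : ℚ) + 1) * Rp ((x : ℚ) + 1) (k + 1))) k
      rw [Finset.sum_range_succ, hAkk] at h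
      simp only [Nat.cast_zero, Nat.cast_add, Nat.cast_one, Nat.cast_ofNat] at h ⊢
      simpa using h
    rw [hS1, show eulerian (k + 1) 0 = eulerian k 0 from rfl]
    norm_num
    ring

/-- Homogenized Worpitzky identity in ℚ[z, y] (z = X 0, y = X 1):
`k! z^k = ∑_{i=1}^{k} A(k, i-1) ∏_{j=1}^{k} (z + (i-j) y)`. -/
theorem homogenized_worpitzky (k : ℕ) (hk : 0 < k) :
    (k.factorial : MvPolynomial (Fin 2) ℚ) * (X 0) ^ k =
      ∑ i ∈ Finset.Icc 1 k, (eulerian k (i - 1) : MvPolynomial (Fin 2) ℚ) *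
        ∏ j ∈ Finset.Icc 1 k, (X 0 + C ((i : ℚ) - (j : ℚ)) * X 1) := by
  rw [worp k hk]
  rw [← Finset.Ico_add_one_right_eq_Icc, Finset.sum_Ico_eq_sum_range]
  apply Finset.sum_congr rfl
  intro i _
  congr 1
  · norm_num
  · rw [Rp, Finset.prod_Ico_eq_prod_range]
    apply Finset.prod_congr (by simp)
    intro j _
    push_cast
    ring_nf
end

section
/- If e > 1 divides both d and n (where d divides m+n), then the generalized Eulerian number A_d(m+n-1, m-1) equals 0; equivalently, A_d(m+n-1, m-1) is nonzero only if gcd(d, n) = 1. -/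
/-- Generalized Eulerian numbers `A_d(k, l)`. -/
def genEulerian (d : ℕ) : ℕ → ℤ → ℤ
  | k, l =>
    if _h : k < d then
      (if 0 ≤ l ∧ l ≤ (k : ℤ) ∧ Int.gcd (l + 1) d = 1 then 1 else 0)
    else if _h0 : d = 0 then 0
    else (l + 1) * genEulerian d (k - d) l + ((k : ℤ) - l) * genEulerian d (k - d) (l - d)
  termination_by k _ => k
  decreasing_by all_goals omega

lemma genEulerian_of_neg (d : ℕ) : ∀ k : ℕ, ∀ l : ℤ, l < 0 → genEulerian d k l = 0 := by
  intro k
  induction k using Nat.strong_induction_on with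
  | _ k ih =>
    intro l hl
    rw [genEulerian]
    split_ifs with h h0 h1
    · exact absurd h0.1 (by omega)
    · rfl
    · rfl
    · rw [ih (k - d) (by omega) l hl, ih (k - d) (by omega) (l - d) (by omega)]
      ring

lemma genEulerian_of_gt (d : ℕ) : ∀ k : ℕ, ∀ l : ℤ, (k : ℤ) < l → genEulerian d k l = 0 := by
  intro k
  induction k using Nat.strong_induction_on with
  | _ k ih =>
    intro l hl
    rw [genEulerian]
    split_ifs with h h0 h1
    · exact absurd h0.2.1 (by omega)
    · rfl
    · rfl
    · have hdk : d ≤ k := by omega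
      have hc : ((k - d : ℕ) : ℤ) = (k : ℤ) - d := by omega
      rw [ih (k - d) (by omega) l (by omega), ih (k - d) (by omega) (l - d) (by omega)]
      ring

lemma genEulerian_diag (d : ℕ) (hd : 1 < d) :
    ∀ m : ℕ, 0 < m → d ∣ m → genEulerian d (m - 1) ((m : ℤ) - 1) = 0 := by
  intro m
  induction m using Nat.strong_induction_on with
  | _ m ih =>
    intro hm hdm
    rw [genEulerian]
    split_ifs with h h0 h1
    · exfalso
      have hmd : m = d := by
        have := Nat.le_of_dvd hm hdm
        omega
      obtain ⟨-, -, hg⟩ := h0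
      have heq : ((m : ℤ) - 1 + 1) = (d : ℤ) := by rw [hmd]; ring
      rw [heq] at hg
      rw [Int.gcd_natCast_natCast, Nat.gcd_self] at hg
      omega
    · rfl
    · rfl
    · have hfirst : genEulerian d (m - 1 - d) ((m : ℤ) - 1) = 0 :=
        genEulerian_of_gt d _ _ (by omega)
      have h2 : ((m - 1 : ℕ) : ℤ) - ((m : ℤ) - 1) = 0 := by omega
      rw [hfirst, h2]
      ring

lemma genEulerian_aux (d e : ℕ) (hd : 0 < d) (he : 1 < e) (hed : e ∣ d) :
    ∀ s m n : ℕ, m + n = s → 0 < m → 0 < n → d ∣ m + n → e ∣ n →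
      genEulerian d (m + n - 1) ((m : ℤ) - 1) = 0 := by
  intro s
  induction s using Nat.strong_induction_on with
  | _ s ih =>
    intro m n hs hm hn hdvd hen
    have hd1 : 1 < d := lt_of_lt_of_le he (Nat.le_of_dvd hd hed)
    have hem : e ∣ m := by
      have h1 : e ∣ m + n := hed.trans hdvd
      have := Nat.dvd_sub h1 hen
      simpa using this
    rw [genEulerian]
    split_ifs with h h0 h1
    · -- base case: m + n = d
      exfalso
      have hmn : m + n = d := by
        have := Nat.le_of_dvd (by omega) hdvd
        omega
      obtain ⟨-, -, hg⟩ := h0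
      have heq : ((m : ℤ) - 1 + 1) = (m : ℤ) := by ring
      rw [heq, Int.gcd_natCast_natCast] at hg
      have h2 : e ∣ Nat.gcd m d := Nat.dvd_gcd hem hed
      rw [hg] at h2
      exact absurd (Nat.le_of_dvd one_pos h2) (by omega)
    · rfl
    · rfl
    · -- recursive case: m + n ≥ 2d
      have hkd : d ≤ m + n - 1 := by omega
      have hsub : d ∣ m + n - d := Nat.dvd_sub hdvd dvd_rfl
      have hfirst : genEulerian d (m + n - 1 - d) ((m : ℤ) - 1) = 0 := by
        rcases lt_trichotomy n d with hlt | heq | hgt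
        · apply genEulerian_of_gt
          omega
        · have hdm : d ∣ m := by
            have : m + n - d = m := by omega
            rwa [this] at hsub
          have heq2 : m + n - 1 - d = m - 1 := by omega
          rw [heq2]
          exact genEulerian_diag d hd1 m hm hdm
        · have h1 : m + n - 1 - d = m + (n - d) - 1 := by omega
          rw [h1]
          exact ih (m + (n - d)) (by omega) m (n - d) rfl hm (by omega)
            (by exact (by omega : m + n - d = m + (n - d)) ▸ hsub)
            (Nat.dvd_sub hen hed)
      have hsecond : genEulerian d (m + n - 1 - d) ((m : ℤ) - 1 - d) = 0 := by
        rcases le_or_gt m d with hle | hgt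
        · apply genEulerian_of_neg
          omega
        · have h1 : m + n - 1 - d = (m - d) + n - 1 := by omega
          have h2 : (m : ℤ) - 1 - d = ((m - d : ℕ) : ℤ) - 1 := by omega
          rw [h1, h2]
          exact ih ((m - d) + n) (by omega) (m - d) n rfl (by omega) hn
            (by exact (by omega : m + n - d = (m - d) + n) ▸ hsub)
            hen
      rw [hfirst, hsecond]
      ring

/-- If some `e > 1` divides both `d` and `n` (where `d ∣ m + n`), then the
generalized Eulerian number `A_d(m+n-1, m-1)` vanishes; equivalently,
`A_d(m+n-1, m-1) ≠ 0` forces `gcd(d, n) = 1`. -/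
theorem genEulerian_eq_zero_of_not_coprime (m n d e : ℕ) (hm : 0 < m) (hn : 0 < n)
    (hd : 0 < d) (hdvd : d ∣ m + n) (he : 1 < e) (hed : e ∣ d) (hen : e ∣ n) :
    genEulerian d (m + n - 1) ((m : ℤ) - 1) = 0 :=
  genEulerian_aux d e hd he hed (m + n) m n rfl hm hn hdvd hen
end
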